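/- Let p ≥ 2, K ≥ 1 be integers, θ* ∈ W* and k ∈ ℕ₊. For any sequence s = (θ₁,...,θ_k) ∈ W^{∘k} (meaning diff(θ_{i-1}, θ_i) ≥ p/4 for all i ∈ [k], with θ₀ := 𝟏), the value f_{θ*}(s) = (∏_{i∈[k]} g(diff(θ_{i-1}, θ_i))) · g(diff(θ_k, θ*)) satisfies 0 < f_{θ*}(s) ≤ (25/32)^{k + [diff(θ_k, θ*) ≥ p/4]}. -/

import Mathlib

/-- Hamming distance on `{-1,1}^p` (as functions `Fin p → ℤ`). -/
def hamDiff (p : ℕ) (a b : Fin p → ℤ) : ℕ :=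
  (Finset.univ.filter fun i => a i ≠ b i).card

/-- `g(x) = 1 - x/p + x(x-1)/(2p²)`. -/
noncomputable def gFun (p : ℕ) (x : ℝ) : ℝ :=
  1 - x / p + x * (x - 1) / (2 * (p : ℝ) ^ 2)

/-!
Every factor of `f_{θ*}(s)` is `g` evaluated at a Hamming distance, i.e. at a point of `[0, p]`.
There `g` is positive and decreasing, so every factor lies in `(0, g 0] = (0, 1]`, and every
factor whose argument is at least `p/4` is at most `g(p/4) = 25/32 - 1/(8p)`.
-/

lemma hamDiff_le (p : ℕ) (a b : Fin p → ℤ) : hamDiff p a b ≤ p := by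
  simpa [hamDiff] using Finset.card_filter_le Finset.univ fun i => a i ≠ b i

namespace gFun

@[simp]
lemma zero_right (p : ℕ) : gFun p 0 = 1 := by
  simp [gFun]

variable {p : ℕ}

lemma pos (hp : 2 ≤ p) {x : ℝ} (hx : x ≤ p) : 0 < gFun p x := by
  have hp' : (2 : ℝ) ≤ p := by exact_mod_cast hp
  have key : gFun p x = ((p - x) ^ 2 + (p ^ 2 - x)) / (2 * (p : ℝ) ^ 2) := by
    unfold gFun
    field_simp
    ring
  rw [key]
  have : x < (p : ℝ) ^ 2 := by nlinarith
  exact div_pos (add_pos_of_nonneg_of_pos (sq_nonneg _) (sub_pos.mpr this)) (by positivity)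

/-- `g` is a quadratic with vertex at `p + 1/2`. -/
lemma antitoneOn (hp : 0 < p) : AntitoneOn (gFun p) (Set.Iic (p + 1 / 2)) := by
  intro x _ y hy hxy
  have hp' : (0 : ℝ) < p := by exact_mod_cast hp
  have key : gFun p x - gFun p y = (y - x) * (2 * p + 1 - x - y) / (2 * (p : ℝ) ^ 2) := by
    unfold gFun
    field_simp
    ring
  have : 0 ≤ (y - x) * (2 * p + 1 - x - y) := by
    apply mul_nonneg <;> linarith [Set.mem_Iic.mp hy]
  linarith [div_nonneg this (by positivity : (0 : ℝ) ≤ 2 * (p : ℝ) ^ 2)]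

lemma le_one (hp : 0 < p) {x : ℝ} (hx0 : 0 ≤ x) (hx : x ≤ p) : gFun p x ≤ 1 := by
  have hp' : (0 : ℝ) ≤ p := by positivity
  simpa using antitoneOn hp (Set.mem_Iic.mpr (by linarith)) (Set.mem_Iic.mpr (by linarith)) hx0

lemma quarter_lt (hp : 0 < p) : gFun p (p / 4) < 25 / 32 := by
  have hp' : (0 : ℝ) < p := by exact_mod_cast hp
  have key : gFun p (p / 4) = 25 / 32 - 1 / (8 * p) := by
    unfold gFun
    field_simp
    ring
  rw [key]
  have : 0 < 1 / (8 * (p : ℝ)) := by positivity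
  linarith

lemma le_of_quarter_le (hp : 0 < p) {x : ℝ} (hx0 : p / 4 ≤ x) (hx : x ≤ p) :
    gFun p x ≤ 25 / 32 := by
  have hp' : (0 : ℝ) ≤ p := by positivity
  calc gFun p x ≤ gFun p (p / 4) :=
        antitoneOn hp (Set.mem_Iic.mpr (by linarith)) (Set.mem_Iic.mpr (by linarith)) hx0
    _ ≤ 25 / 32 := (quarter_lt hp).le

end gFun

section hamDiff

variable {p : ℕ} (a b : Fin p → ℤ)

lemma gFun_hamDiff_pos (hp : 2 ≤ p) : 0 < gFun p (hamDiff p a b) :=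
  gFun.pos hp (by exact_mod_cast hamDiff_le p a b)

lemma gFun_hamDiff_le_one (hp : 0 < p) : gFun p (hamDiff p a b) ≤ 1 :=
  gFun.le_one hp (by positivity) (by exact_mod_cast hamDiff_le p a b)

lemma gFun_hamDiff_le_of_quarter_le (hp : 0 < p) (h : (p : ℝ) / 4 ≤ hamDiff p a b) :
    gFun p (hamDiff p a b) ≤ 25 / 32 :=
  gFun.le_of_quarter_le hp h (by exact_mod_cast hamDiff_le p a b)

end hamDiff

theorem f_bounds_general (p k : ℕ) (hp : 2 ≤ p)
    (θ : ℕ → Fin p → ℤ)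
    (θs : Fin p → ℤ)
    (hfar : ∀ i ∈ Finset.Icc 1 k, (p : ℝ) / 4 ≤ (hamDiff p (θ (i - 1)) (θ i) : ℝ)) :
    0 < (∏ i ∈ Finset.Icc 1 k, gFun p (hamDiff p (θ (i - 1)) (θ i)))
          * gFun p (hamDiff p (θ k) θs)
    ∧ (∏ i ∈ Finset.Icc 1 k, gFun p (hamDiff p (θ (i - 1)) (θ i)))
          * gFun p (hamDiff p (θ k) θs)
        ≤ (25 / 32 : ℝ)
            ^ (k + if (p : ℝ) / 4 ≤ (hamDiff p (θ k) θs : ℝ) then 1 else 0) := by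
  have hp0 : 0 < p := by omega
  refine ⟨mul_pos (Finset.prod_pos fun i _ => gFun_hamDiff_pos _ _ hp)
    (gFun_hamDiff_pos _ _ hp), ?_⟩
  have hsteps : ∏ i ∈ Finset.Icc 1 k, gFun p (hamDiff p (θ (i - 1)) (θ i)) ≤ (25 / 32) ^ k := by
    calc ∏ i ∈ Finset.Icc 1 k, gFun p (hamDiff p (θ (i - 1)) (θ i))
        ≤ ∏ _i ∈ Finset.Icc 1 k, (25 / 32 : ℝ) :=
          Finset.prod_le_prod (fun i _ => (gFun_hamDiff_pos _ _ hp).le)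
            fun i hi => gFun_hamDiff_le_of_quarter_le _ _ hp0 (hfar i hi)
      _ = (25 / 32) ^ k := by simp [div_pow]
  have hlast : gFun p (hamDiff p (θ k) θs)
      ≤ (25 / 32 : ℝ) ^ (if (p : ℝ) / 4 ≤ (hamDiff p (θ k) θs : ℝ) then 1 else 0) := by
    split_ifs with h
    · simpa using gFun_hamDiff_le_of_quarter_le _ _ hp0 h
    · simpa using gFun_hamDiff_le_one _ _ hp0
  rw [pow_add]
  exact mul_le_mul hsteps hlast (gFun_hamDiff_pos _ _ hp).le (by positivity)

/-- Bounds on the abstract-game value `f_{θ*}(s)` for a sequence `s ∈ W^{∘k}`: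
`0 < f_{θ*}(s) ≤ (25/32)^(k + [diff(θ_k, θ*) ≥ p/4])`. -/
theorem f_bounds (p K k : ℕ) (hp : 2 ≤ p) (hK : 1 ≤ K) (hk : 1 ≤ k)
    (θ : ℕ → Fin p → ℤ)
    (hθ0 : θ 0 = fun _ => 1)
    (hθpm : ∀ i ∈ Finset.Icc 1 k, ∀ j, θ i j = 1 ∨ θ i j = -1)
    (θs : Fin p → ℤ) (hθs : ∀ j, θs j = 1 ∨ θs j = -1)
    (hθs_lo : (p : ℝ) / 4 ≤ (hamDiff p (fun _ => 1) θs : ℝ))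
    (hθs_hi : ((hamDiff p (fun _ => 1) θs : ℝ)) ≤ 3 * (p : ℝ) / 4)
    (hfar : ∀ i ∈ Finset.Icc 1 k, (p : ℝ) / 4 ≤ (hamDiff p (θ (i - 1)) (θ i) : ℝ)) :
    0 < (∏ i ∈ Finset.Icc 1 k, gFun p (hamDiff p (θ (i - 1)) (θ i)))
          * gFun p (hamDiff p (θ k) θs)
    ∧ (∏ i ∈ Finset.Icc 1 k, gFun p (hamDiff p (θ (i - 1)) (θ i)))
          * gFun p (hamDiff p (θ k) θs)
        ≤ (25 / 32 : ℝ)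
            ^ (k + if (p : ℝ) / 4 ≤ (hamDiff p (θ k) θs : ℝ) then 1 else 0) :=
  f_bounds_general p k hp θ θs hfar
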